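/- Let u be C² with ∇u ≠ 0 at a point of an n-dimensional Riemannian manifold, and let n' ≥ n be real. Then |∇u|^{2p-4}(|H_u|² + p(p-2)A_u²) ≥ (Δ_p u)²/n' + (n'/(n'-1))·(Δ_p u/n' - (p-1)|∇u|^{p-2}A_u)². -/

import Mathlib

noncomputable section

/-- The Hessian `H_f(x)(v,w)` of `f` at `x`, as the derivative of the gradient. -/
def hess {n : ℕ} (f : EuclideanSpace ℝ (Fin n) → ℝ) (x v w : EuclideanSpace ℝ (Fin n)) : ℝ :=
  inner ℝ (fderiv ℝ (gradient f) x v) w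

/-- The divergence of a vector field on Euclidean space. -/
def divg {n : ℕ} (X : EuclideanSpace ℝ (Fin n) → EuclideanSpace ℝ (Fin n))
    (x : EuclideanSpace ℝ (Fin n)) : ℝ :=
  ∑ i : Fin n, inner ℝ (fderiv ℝ X x (EuclideanSpace.single i (1:ℝ)))
      (EuclideanSpace.single i (1:ℝ))

/-- The Laplacian `Δf = div ∇f`. -/
def lapl {n : ℕ} (f : EuclideanSpace ℝ (Fin n) → ℝ) (x : EuclideanSpace ℝ (Fin n)) : ℝ :=
  divg (gradient f) x

/-- The `p`-Laplacian `Δ_p f = div(|∇f|^{p-2}∇f)`. -/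
def plap {n : ℕ} (p : ℝ) (f : EuclideanSpace ℝ (Fin n) → ℝ)
    (x : EuclideanSpace ℝ (Fin n)) : ℝ :=
  divg (fun y => ‖gradient f y‖ ^ (p-2) • gradient f y) x

/-- `A_u = H_u(∇u,∇u)/|∇u|²`. -/
def Au {n : ℕ} (f : EuclideanSpace ℝ (Fin n) → ℝ) (x : EuclideanSpace ℝ (Fin n)) : ℝ :=
  hess f x (gradient f x) (gradient f x) / ‖gradient f x‖ ^ 2

/-- The squared Hilbert–Schmidt norm `|H_u|²` of the Hessian. -/
def hessNormSq {n : ℕ} (f : EuclideanSpace ℝ (Fin n) → ℝ)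
    (x : EuclideanSpace ℝ (Fin n)) : ℝ :=
  ∑ i : Fin n, ∑ j : Fin n,
    (hess f x (EuclideanSpace.single i (1:ℝ)) (EuclideanSpace.single j (1:ℝ))) ^ 2

/-- The second order part `P_u^{II}` of the linearized `p`-Laplacian:
`P_u^{II}(η) = |∇u|^{p-2}Δη + (p-2)|∇u|^{p-4}H_η(∇u,∇u)`. -/
def PII {n : ℕ} (p : ℝ) (u η : EuclideanSpace ℝ (Fin n) → ℝ)
    (x : EuclideanSpace ℝ (Fin n)) : ℝ :=
  ‖gradient u x‖ ^ (p-2) * lapl η x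
    + (p-2) * ‖gradient u x‖ ^ (p-4) * hess η x (gradient u x) (gradient u x)

/-- The Ricci curvature of flat Euclidean space (identically zero). -/
def ricci {n : ℕ} (x v w : EuclideanSpace ℝ (Fin n)) : ℝ := 0

/-! Since `Δ_p u = |∇u|^{p-2}(Δu + (p-2)A_u)`, both sides carry the factor `|∇u|^{2p-4}`, and the
identity `s²/N + N/(N-1)·(s/N - b)² = b² + (s-b)²/(N-1)` (with `s = Δu + (p-2)A_u`,
`b = (p-1)A_u`, `N = n'`) reduces the claim to `A_u² + (Δu - A_u)²/(n'-1) ≤ |H_u|²`, a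
Cauchy–Schwarz inequality for the Hessian matrix in the coordinates of `ν = ∇u/|∇u|`. -/

open Finset

theorem sq_add_sq_trace_sub_div_le_sum_sq {ι : Type*} [Fintype ι] (H : ι → ι → ℝ) {ν : ι → ℝ}
    (hν : ∑ i, ν i ^ 2 = 1) {m : ℝ} (hm : (Fintype.card ι : ℝ) - 1 ≤ m) :
    (∑ i, ∑ j, H i j * (ν i * ν j)) ^ 2
      + (∑ i, H i i - ∑ i, ∑ j, H i j * (ν i * ν j)) ^ 2 / m ≤ ∑ i, ∑ j, H i j ^ 2 := by
  classical
  set a := ∑ i, ∑ j, H i j * (ν i * ν j)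
  have hP : ∑ i, ∑ j, (ν i * ν j) ^ 2 = 1 := by
    simp_rw [mul_pow, ← mul_sum, ← sum_mul, hν, one_mul]
  -- Cauchy–Schwarz for `H - a ννᵀ` against `I - ννᵀ`, both orthogonal to `ννᵀ` in the
  -- Frobenius inner product.
  have hcs := sum_mul_sq_le_sq_mul_sq univ (fun k : ι × ι => H k.1 k.2 - a * (ν k.1 * ν k.2))
    (fun k => (if k.1 = k.2 then 1 else 0) - ν k.1 * ν k.2)
  simp only [Fintype.sum_prod_type] at hcs
  have hfg : ∑ i, ∑ j, (H i j - a * (ν i * ν j)) * ((if i = j then 1 else 0) - ν i * ν j)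
      = ∑ i, H i i - a := by
    simp [sub_mul, mul_sub, mul_ite, sum_sub_distrib, mul_assoc, ← mul_sum, hP, ← sq, hν, a]
  have hff : ∑ i, ∑ j, (H i j - a * (ν i * ν j)) ^ 2 = ∑ i, ∑ j, H i j ^ 2 - a ^ 2 := by
    have (i j : ι) : (H i j - a * (ν i * ν j)) ^ 2
        = H i j ^ 2 - 2 * a * (H i j * (ν i * ν j)) + a ^ 2 * (ν i * ν j) ^ 2 := by ring
    simp only [this, sum_add_distrib, sum_sub_distrib, ← mul_sum, hP]
    ring
  have hgg : ∑ i, ∑ j, ((if i = j then (1:ℝ) else 0) - ν i * ν j) ^ 2 = Fintype.card ι - 1 := by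
    simp only [sub_sq, ite_pow, one_pow, ne_eq, OfNat.ofNat_ne_zero, not_false_eq_true, zero_pow,
      mul_ite, mul_one, mul_zero, ite_mul, zero_mul, sum_add_distrib, sum_sub_distrib, sum_ite_eq,
      mem_univ, ↓reduceIte, ← sq, sum_const, card_univ, nsmul_eq_mul, ← mul_sum, hν, hP]
    ring
  rw [hfg, hff, hgg] at hcs
  have hHa : 0 ≤ ∑ i, ∑ j, H i j ^ 2 - a ^ 2 :=
    hff ▸ sum_nonneg fun i _ => sum_nonneg fun j _ => sq_nonneg _
  have hcard : 0 ≤ (Fintype.card ι : ℝ) - 1 :=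
    hgg ▸ sum_nonneg fun i _ => sum_nonneg fun j _ => sq_nonneg _
  rcases (hcard.trans hm).eq_or_lt with rfl | hm0
  · rw [div_zero]
    linarith
  · have : (∑ i, H i i - a) ^ 2 / m ≤ ∑ i, ∑ j, H i j ^ 2 - a ^ 2 := by
      rw [div_le_iff₀ hm0]
      exact hcs.trans (mul_le_mul_of_nonneg_left hm hHa)
    linarith

theorem ContDiffAt.differentiableAt_gradient {F : Type*} [NormedAddCommGroup F]
    [InnerProductSpace ℝ F] [CompleteSpace F] {u : F → ℝ} {x : F} (hu : ContDiffAt ℝ 2 u x) :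
    DifferentiableAt ℝ (gradient u) x :=
  (InnerProductSpace.toDual ℝ F).symm.toContinuousLinearEquiv.differentiableAt.comp x
    ((hu.fderiv_right (m := 1) (by norm_num)).differentiableAt one_ne_zero)

theorem HasFDerivAt.norm_rpow {E F : Type*} [NormedAddCommGroup E] [NormedSpace ℝ E]
    [NormedAddCommGroup F] [InnerProductSpace ℝ F] {G : E → F} {G' : E →L[ℝ] F} {x : E}
    (hG : HasFDerivAt G G' x) (h0 : G x ≠ 0) (q : ℝ) :
    HasFDerivAt (fun y => ‖G y‖ ^ q) ((q * ‖G x‖ ^ (q - 2)) • (innerSL ℝ (G x)).comp G') x := by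
  have hpow (v : F) : (‖v‖ ^ 2) ^ (q / 2) = ‖v‖ ^ q := by
    rw [← Real.rpow_natCast, ← Real.rpow_mul (norm_nonneg v)]
    norm_num [mul_div_cancel₀]
  have := hG.norm_sq.rpow_const (p := q / 2) (Or.inl (by positivity))
  simp only [hpow] at this
  convert this using 1
  have hexp : (‖G x‖ ^ 2) ^ (q / 2 - 1) = ‖G x‖ ^ (q - 2) := by
    rw [← Real.rpow_natCast, ← Real.rpow_mul (norm_nonneg _)]
    ring_nf
  ext v
  simp [hexp]
  ring

theorem divg_smul {n : ℕ} {φ : EuclideanSpace ℝ (Fin n) → ℝ}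
    {X : EuclideanSpace ℝ (Fin n) → EuclideanSpace ℝ (Fin n)} {x : EuclideanSpace ℝ (Fin n)}
    (hφ : DifferentiableAt ℝ φ x) (hX : DifferentiableAt ℝ X x) :
    divg (fun y => φ y • X y) x = φ x * divg X x + fderiv ℝ φ x (X x) := by
  rw [divg, (hφ.hasFDerivAt.fun_smul hX.hasFDerivAt).fderiv]
  conv_rhs => rw [← (EuclideanSpace.basisFun (Fin n) ℝ).sum_repr (X x)]
  simp [divg, inner_add_left, sum_add_distrib, mul_sum, EuclideanSpace.inner_single_right, mul_comm]

theorem hess_eq_sum {n : ℕ} (u : EuclideanSpace ℝ (Fin n) → ℝ) (x v w : EuclideanSpace ℝ (Fin n)) :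
    hess u x v w = ∑ i, ∑ j,
      hess u x (EuclideanSpace.single i 1) (EuclideanSpace.single j 1) * (v i * w j) := by
  conv_lhs => rw [← (EuclideanSpace.basisFun (Fin n) ℝ).sum_repr v,
    ← (EuclideanSpace.basisFun (Fin n) ℝ).sum_repr w]
  simp only [hess, EuclideanSpace.basisFun_repr, EuclideanSpace.basisFun_apply, map_sum, map_smul,
    inner_sum, sum_inner, real_inner_smul_right, real_inner_smul_left]
  rw [sum_comm]
  exact sum_congr rfl fun i _ => sum_congr rfl fun j _ => by ring

theorem plap_eq_mul_lapl_add_Au {n : ℕ} (p : ℝ) {u : EuclideanSpace ℝ (Fin n) → ℝ}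
    {x : EuclideanSpace ℝ (Fin n)}
    (hu : ContDiffAt ℝ 2 u x) (hgrad : gradient u x ≠ 0) :
    plap p u x = ‖gradient u x‖ ^ (p - 2) * (lapl u x + (p - 2) * Au u x) := by
  have hD := hu.differentiableAt_gradient
  have hφ := hD.hasFDerivAt.norm_rpow hgrad (p - 2)
  have hV : 0 < ‖gradient u x‖ := norm_pos_iff.2 hgrad
  rw [plap, divg_smul hφ.differentiableAt hD, hφ.fderiv, Real.rpow_sub hV (p - 2) 2, Real.rpow_two]
  simp only [smul_apply, ContinuousLinearMap.comp_apply, coe_innerSL_apply, smul_eq_mul, lapl, Au,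
    hess, real_inner_comm]
  field_simp

theorem sum_sq_div_norm_eq_one {n : ℕ} {v : EuclideanSpace ℝ (Fin n)} (hv : v ≠ 0) :
    ∑ i, (v i / ‖v‖) ^ 2 = 1 := by
  have hv' : ‖v‖ ^ 2 ≠ 0 := by positivity
  simp_rw [div_pow]
  rw [← sum_div, div_eq_one_iff_eq hv', EuclideanSpace.norm_sq_eq]
  simp

theorem Au_eq_sum {n : ℕ} (u : EuclideanSpace ℝ (Fin n) → ℝ) (x : EuclideanSpace ℝ (Fin n)) :
    Au u x = ∑ i, ∑ j, hess u x (EuclideanSpace.single i 1) (EuclideanSpace.single j 1)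
      * (gradient u x i / ‖gradient u x‖ * (gradient u x j / ‖gradient u x‖)) := by
  rw [Au, hess_eq_sum, sum_div]
  refine sum_congr rfl fun i _ => ?_
  rw [sum_div]
  refine sum_congr rfl fun j _ => ?_
  ring

theorem Au_sq_add_sq_div_le_hessNormSq {n : ℕ} {u : EuclideanSpace ℝ (Fin n) → ℝ}
    {x : EuclideanSpace ℝ (Fin n)} (hgrad : gradient u x ≠ 0) {m : ℝ} (hm : (n : ℝ) - 1 ≤ m) :
    Au u x ^ 2 + (lapl u x - Au u x) ^ 2 / m ≤ hessNormSq u x := by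
  have := sq_add_sq_trace_sub_div_le_sum_sq
    (fun i j => hess u x (EuclideanSpace.single i 1) (EuclideanSpace.single j 1))
    (sum_sq_div_norm_eq_one hgrad) (m := m) (by simpa using hm)
  rwa [← Au_eq_sum] at this

theorem stmt15_general {n : ℕ} (hn : 2 ≤ n) (p n' : ℝ) (hn' : (n:ℝ) ≤ n')
    (u : EuclideanSpace ℝ (Fin n) → ℝ) (x : EuclideanSpace ℝ (Fin n))
    (hu : ContDiffAt ℝ 2 u x) (hgrad : gradient u x ≠ 0) :
    (plap p u x) ^ 2 / n'
      + (n' / (n'-1)) * (plap p u x / n' - (p-1) * ‖gradient u x‖ ^ (p-2) * Au u x) ^ 2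
    ≤ ‖gradient u x‖ ^ (2*p-4) * (hessNormSq u x + p * (p-2) * (Au u x) ^ 2) := by
  set r := ‖gradient u x‖ ^ (p - 2)
  set A := Au u x
  set T := lapl u x
  have hn'2 : (2 : ℝ) ≤ n' := le_trans (by exact_mod_cast hn) hn'
  have hn'0 : n' ≠ 0 := by linarith
  have hn'1 : n' - 1 ≠ 0 := by linarith
  have hr : ‖gradient u x‖ ^ (2 * p - 4) = r ^ 2 := by
    rw [← Real.rpow_natCast, ← Real.rpow_mul (norm_nonneg _)]
    ring_nf
  have hcd : A ^ 2 + (T - A) ^ 2 / (n' - 1) ≤ hessNormSq u x :=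
    Au_sq_add_sq_div_le_hessNormSq hgrad (by linarith)
  rw [plap_eq_mul_lapl_add_Au p hu hgrad, hr]
  calc (r * (T + (p - 2) * A)) ^ 2 / n'
        + n' / (n' - 1) * (r * (T + (p - 2) * A) / n' - (p - 1) * r * A) ^ 2
      = r ^ 2 * ((p - 1) ^ 2 * A ^ 2 + (T - A) ^ 2 / (n' - 1)) := by
        field_simp
        ring
    _ ≤ r ^ 2 * (hessNormSq u x + p * (p - 2) * A ^ 2) := by
        have : (p - 1) ^ 2 * A ^ 2 + (T - A) ^ 2 / (n' - 1)
            ≤ hessNormSq u x + p * (p - 2) * A ^ 2 := by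
          linear_combination hcd
        exact mul_le_mul_of_nonneg_left this (sq_nonneg r)

/-- generalized curvature–dimension inequality: for `u` of class
`C²` near `x` with `∇u(x) ≠ 0` on an `n`-manifold and any real `n' ≥ n`,
`|∇u|^{2p-4}(|H_u|² + p(p-2)A_u²) ≥ (Δ_p u)²/n' + (n'/(n'-1))(Δ_p u/n' - (p-1)|∇u|^{p-2}A_u)²`. -/
theorem stmt15 {n : ℕ} (hn : 2 ≤ n) (p n' : ℝ) (hp : 1 < p) (hn' : (n:ℝ) ≤ n')
    (u : EuclideanSpace ℝ (Fin n) → ℝ) (x : EuclideanSpace ℝ (Fin n))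
    (hu : ContDiffAt ℝ 2 u x) (hgrad : gradient u x ≠ 0) :
    (plap p u x) ^ 2 / n'
      + (n' / (n'-1)) * (plap p u x / n' - (p-1) * ‖gradient u x‖ ^ (p-2) * Au u x) ^ 2
    ≤ ‖gradient u x‖ ^ (2*p-4) * (hessNormSq u x + p * (p-2) * (Au u x) ^ 2) :=
  stmt15_general hn p n' hn' u x hu hgrad

end
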